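/- For any finite undirected multigraph G = (V,E), any sets A, B ⊆ V², and any subset S ⊆ E, the number |Four_{G,S}(A,B)| of (A,B)-valid fourientations of G whose set of solid edges equals S does not depend on S; i.e., for all S, S' ⊆ E one has |Four_{G,S}(A,B)| = |Four_{G,S'}(A,B)|. -/

import Mathlib

namespace SubgraphsVsOrientations

/-- The four possible configurations of an edge in a fourientation:
`zero` = 0-way, `forward`/`backward` = the two 1-way configurations (relative to
a reference direction of the edge), `two` = 2-way. -/
inductive Four : Type
  | zero | forward | backward | two
deriving DecidableEq

instance instFintypeFour : Fintype Four :=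
  ⟨{Four.zero, Four.forward, Four.backward, Four.two}, fun x => by cases x <;> simp⟩

variable {V E : Type*}

/-- Whether configuration `c` allows traversal of the edge in direction `b`
(`b = true` means from `src` to `tgt`). -/
def allows : Four → Bool → Prop
  | Four.zero, _ => False
  | Four.forward, b => b = true
  | Four.backward, b => b = false
  | Four.two, _ => True

/-- An edge configuration is solid if it is 0-way or 2-way. -/
def IsSolid (c : Four) : Prop := c = Four.zero ∨ c = Four.two

/-- A configuration is 1-way if it is `forward` or `backward`. -/
def IsOneWay (c : Four) : Prop := c = Four.forward ∨ c = Four.backward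

/-- Reversing a configuration: swaps the two 1-way configurations,
fixes 0-way and 2-way. -/
def flipFour : Four → Four
  | Four.forward => Four.backward
  | Four.backward => Four.forward
  | c => c

/-- The 1-way configuration corresponding to direction `b`. -/
def oneWayFour (b : Bool) : Four := if b then Four.forward else Four.backward

/-- Tail of the arc `(e, b)` (the edge `e` traversed in direction `b`). -/
def arcTail (src tgt : E → V) (a : E × Bool) : V := if a.2 then src a.1 else tgt a.1

/-- Head of the arc `(e, b)`. -/
def arcHead (src tgt : E → V) (a : E × Bool) : V := if a.2 then tgt a.1 else src a.1

/-- One-step relation of the digraph `G⃗(A,B;φ)`: there is an arc from `x` to `y`, either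
a traversable directed edge of the fourientation `φ`, or an extra arc from `A ∪ B`. -/
def arcStep (src tgt : E → V) (A B : Set (V × V)) (φ : E → Four) (x y : V) : Prop :=
  (∃ a : E × Bool, allows (φ a.1) a.2 ∧ arcTail src tgt a = x ∧ arcHead src tgt a = y)
    ∨ (x, y) ∈ A ∪ B

/-- Reachability by a directed path in the digraph `G⃗(A,B;φ)`. -/
def reach (src tgt : E → V) (A B : Set (V × V)) (φ : E → Four) : V → V → Prop :=
  Relation.ReflTransGen (arcStep src tgt A B φ)

/-- A fourientation `φ` is `(A,B)`-valid: in `G⃗(A,B;φ)`, for every `(u,v) ∈ A` the vertex `v`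
cannot reach `u`, and for every `(u,v) ∈ B` the vertex `v` can reach `u`. -/
def IsValid (src tgt : E → V) (A B : Set (V × V)) (φ : E → Four) : Prop :=
  (∀ p ∈ A, ¬ reach src tgt A B φ p.2 p.1) ∧ (∀ p ∈ B, reach src tgt A B φ p.2 p.1)

/-- The set of solid edges of a fourientation. -/
def solidSet (φ : E → Four) : Set E := {e | IsSolid (φ e)}

/-- The fourientation associated to an orientation `σ : E → Bool` (every edge 1-way). -/
def toFour (σ : E → Bool) : E → Four := fun e => oneWayFour (σ e)

open Classical in
/-- The fourientation associated to a (spanning) subgraph `F ⊆ E`: edges of `F` are 2-way,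
the other edges are 0-way. -/
noncomputable def toFourSub (F : Set E) : E → Four :=
  fun e => if e ∈ F then Four.two else Four.zero

/-- The arc `(e,b)` is the arc of a 1-way edge of `φ`. -/
def oneWayArc (φ : E → Four) (a : E × Bool) : Prop := φ a.1 = oneWayFour a.2

/-- `Cyc(φ)`: the set of cyclic 1-way edges (arcs) of the fourientation `φ`, in the digraph
`G⃗(A,B;φ)`: the head of the arc can reach its tail. -/
def CycSet (src tgt : E → V) (A B : Set (V × V)) (φ : E → Four) : Set (E × Bool) :=
  {a | oneWayArc φ a ∧ reach src tgt A B φ (arcHead src tgt a) (arcTail src tgt a)}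

/-- `Acy(φ)`: the set of acyclic 1-way edges (arcs) of the fourientation `φ`. -/
def AcySet (src tgt : E → V) (A B : Set (V × V)) (φ : E → Four) : Set (E × Bool) :=
  {a | oneWayArc φ a ∧ ¬ reach src tgt A B φ (arcHead src tgt a) (arcTail src tgt a)}

/-- `l` is (the arc sequence of) a directed cycle: a nonempty closed chain of arcs
visiting no vertex twice. -/
def IsDirCycle (src tgt : E → V) (l : List (E × Bool)) : Prop :=
  ∃ h : l ≠ [],
    l.Chain' (fun a b => arcHead src tgt a = arcTail src tgt b) ∧
    arcHead src tgt (l.getLast h) = arcTail src tgt (l.head h) ∧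
    (l.map (arcTail src tgt)).Nodup

/-- Reversing the directed cycle `l` in the fourientation `φ`: all 1-way edges on the cycle are
reversed, other edges (in particular 2-way edges of the cycle) are unchanged. -/
def revCyc [DecidableEq E] (φ : E → Four) (l : List (E × Bool)) : E → Four :=
  fun e => if (e, true) ∈ l ∨ (e, false) ∈ l then flipFour (φ e) else φ e

/-- One cycle-reversal move: `ψ` is obtained from `φ` by reversing a directed cycle of `φ`. -/
def CycleStep (src tgt : E → V) [DecidableEq E] (φ ψ : E → Four) : Prop :=
  ∃ l, IsDirCycle src tgt l ∧ (∀ a ∈ l, allows (φ a.1) a.2) ∧ ψ = revCyc φ l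

/-- The edge `e` crosses the cut given by `V1` (in either direction). -/
def edgeCrosses (src tgt : E → V) (V1 : Set V) (e : E) : Prop :=
  (src e ∈ V1 ∧ tgt e ∉ V1) ∨ (tgt e ∈ V1 ∧ src e ∉ V1)

/-- The cut `V1 / V1ᶜ` defines a directed `(A,B)`-cocycle of `G⃗(A,B;φ)`: the set of arcs from
`V1` to `V1ᶜ` is nonempty, no arc of the digraph goes from `V1ᶜ` to `V1`, and no arc of
`A ∪ B` crosses the cut (in either direction). -/
def IsABCocycleCut (src tgt : E → V) (A B : Set (V × V)) (φ : E → Four) (V1 : Set V) : Prop :=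
  (∃ a : E × Bool, allows (φ a.1) a.2 ∧ arcTail src tgt a ∈ V1 ∧ arcHead src tgt a ∉ V1) ∧
  (∀ a : E × Bool, allows (φ a.1) a.2 → ¬ (arcTail src tgt a ∉ V1 ∧ arcHead src tgt a ∈ V1)) ∧
  (∀ p ∈ A ∪ B, ((p : V × V).1 ∈ V1 ↔ p.2 ∈ V1))

open Classical in
/-- Reversing the directed cocycle given by the cut `V1`: all 1-way edges crossing the cut are
reversed, other edges (in particular 0-way edges crossing the cut) are unchanged. -/
noncomputable def revCut (src tgt : E → V) (φ : E → Four) (V1 : Set V) : E → Four :=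
  fun e => if edgeCrosses src tgt V1 e then flipFour (φ e) else φ e

/-- One cocycle-reversal move: `ψ` is obtained from `φ` by reversing a directed
`(A,B)`-cocycle of `φ`. -/
def CocycleStep (src tgt : E → V) (A B : Set (V × V)) (φ ψ : E → Four) : Prop :=
  ∃ V1 : Set V, IsABCocycleCut src tgt A B φ V1 ∧ ψ = revCut src tgt φ V1

/-- One cycle- or cocycle-reversal move. -/
def CCStep (src tgt : E → V) (A B : Set (V × V)) [DecidableEq E] (φ ψ : E → Four) : Prop :=
  CycleStep src tgt φ ψ ∨ CocycleStep src tgt A B φ ψ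

/-- `φ` contains no cycle (of the graph `G`) made entirely of 2-way edges. -/
def NoTwoWayCycle (src tgt : E → V) (φ : E → Four) : Prop :=
  ¬ ∃ l : List (E × Bool), IsDirCycle src tgt l ∧ (l.map Prod.fst).Nodup ∧
      ∀ a ∈ l, φ a.1 = Four.two

/-- `φ` contains no `(A,B)`-cocycle (of the graph `G`) made entirely of 0-way edges:
there is no cut, not crossed by any arc of `A ∪ B`, crossed by at least one edge of `G`,
all of whose crossing edges are 0-way. -/
def NoZeroWayCocycle (src tgt : E → V) (A B : Set (V × V)) (φ : E → Four) : Prop :=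
  ¬ ∃ V1 : Set V, (∃ e, edgeCrosses src tgt V1 e) ∧
      (∀ e, edgeCrosses src tgt V1 e → φ e = Four.zero) ∧
      (∀ p ∈ A ∪ B, ((p : V × V).1 ∈ V1 ↔ p.2 ∈ V1))

/-- The subgraph `F` contains no cycle (it is a forest). -/
def NoCycleIn (src tgt : E → V) (F : Set E) : Prop :=
  ¬ ∃ l : List (E × Bool), IsDirCycle src tgt l ∧ (l.map Prod.fst).Nodup ∧ ∀ a ∈ l, a.1 ∈ F

/-- One undirected adjacency step in the graph `F ∪ A̲ ∪ B̲`. -/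
def usym (src tgt : E → V) (A B : Set (V × V)) (F : Set E) (x y : V) : Prop :=
  (∃ e ∈ F, (src e = x ∧ tgt e = y) ∨ (src e = y ∧ tgt e = x)) ∨
  (∃ p ∈ A ∪ B, ((p : V × V) = (x, y) ∨ p = (y, x)))

/-- Connectivity (by undirected paths) in the graph `F ∪ A̲ ∪ B̲`. -/
def ureach (src tgt : E → V) (A B : Set (V × V)) (F : Set E) : V → V → Prop :=
  Relation.ReflTransGen (usym src tgt A B F)

/-- The subgraph `F` is `(A,B)`-connected: the connected components of `F ∪ A̲ ∪ B̲`
coincide with those of `G ∪ A̲ ∪ B̲`. -/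
def ABConnected (src tgt : E → V) (A B : Set (V × V)) (F : Set E) : Prop :=
  ∀ x y, ureach src tgt A B F x y ↔ ureach src tgt A B Set.univ x y

/-! Fix an edge `e` and the configuration of all other edges, and let `R` be reachability when
`e` is 0-way. Making `e` 1-way adds one arc `u → v` or `v → u` to `R`, making it 2-way adds both,
and a short case analysis on the validity conditions shows that the number of valid solid
choices for `e` equals the number of valid 1-way choices (compare "both valid" and "at least one
valid"). Hence the valid choices for `e` can be paired off, solid with 1-way, by a pairing that
depends only on the other edges; applying it at `e` is an involution on fourientations that
preserves validity and toggles the solidity of `e` alone. Toggling the edges of `S` one at a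
time shows that every count equals the one for `S = ∅`. -/

open Relation Function

section AddArc

variable {α : Type*}

/-- Reachability in the preorder `R` after adding the arc `u → v`. -/
def addArc (R : α → α → Prop) (u v x y : α) : Prop :=
  R x y ∨ (R x u ∧ R v y)

theorem reflTransGen_or_arc (r : α → α → Prop) (u v : α) :
    ReflTransGen (fun a b => r a b ∨ (a = u ∧ b = v)) = addArc (ReflTransGen r) u v := by
  funext x y
  apply propext
  constructor
  · intro h
    induction h with
    | refl => exact Or.inl .refl
    | tail _ hstep ih =>
      rcases hstep with hr | ⟨rfl, rfl⟩
      · exact ih.imp (·.tail hr) fun ⟨hxu, hvy⟩ => ⟨hxu, hvy.tail hr⟩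
      · exact Or.inr ⟨ih.elim id (·.1), .refl⟩
  · have lift := ReflTransGen.mono (p := fun a b => r a b ∨ (a = u ∧ b = v)) fun _ _ => Or.inl
    rintro (h | ⟨hxu, hvy⟩)
    · exact lift _ _ h
    · exact ((lift _ _ hxu).tail (Or.inr ⟨rfl, rfl⟩)).trans (lift _ _ hvy)

def addEdge (R : α → α → Prop) (u v x y : α) : Prop :=
  addArc R u v x y ∨ addArc R v u x y

theorem addEdge_comm (R : α → α → Prop) (u v : α) : addEdge R u v = addEdge R v u := by
  funext x y
  exact propext or_comm

variable {R : α → α → Prop} [IsTrans α R]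

theorem addArc_eq_of_rel {u v : α} (huv : R u v) : addArc R u v = R := by
  funext x y
  exact propext ⟨fun h => h.elim id fun ⟨hxu, hvy⟩ => _root_.trans (_root_.trans hxu huv) hvy,
    Or.inl⟩

theorem addEdge_eq_of_rel {u v : α} (huv : R u v) : addEdge R u v = addArc R v u := by
  funext x y
  rw [addEdge, addArc_eq_of_rel huv]
  exact propext (or_iff_right_of_imp Or.inl)

theorem rel_of_addArc_of_not_rel {u v a b : α} (hab : R a b) (h : addArc R u v b a)
    (hn : ¬ R b a) : R v u := by
  obtain ⟨hbu, hva⟩ := h.resolve_left hn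
  exact _root_.trans (_root_.trans hva hab) hbu

theorem addArc_addArc_swap (u v : α) : addArc (addArc R u v) v u = addEdge R u v := by
  funext x y
  unfold addEdge addArc
  apply propext
  constructor
  · rintro (h | ⟨hxv | ⟨hxu, -⟩, huy | ⟨-, hvy⟩⟩)
    · exact Or.inl h
    · exact Or.inr (Or.inr ⟨hxv, huy⟩)
    · exact Or.inl (Or.inl (_root_.trans hxv hvy))
    · exact Or.inl (Or.inl (_root_.trans hxu huy))
    · exact Or.inl (Or.inr ⟨hxu, hvy⟩)
  · rintro (h | h | ⟨hxv, huy⟩)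
    · exact Or.inl h
    · exact Or.inl (Or.inl h)
    · exact Or.inr ⟨Or.inl hxv, Or.inl huy⟩

end AddArc

section ValidFor

variable {α : Type*} (A B : Set (α × α))

def ValidFor (Q : α → α → Prop) : Prop :=
  (∀ p ∈ A, ¬ Q p.2 p.1) ∧ (∀ p ∈ B, Q p.2 p.1)

variable {A B} {R : α → α → Prop} [IsTrans α R]

theorem validFor_and_iff (u v : α) :
    (ValidFor A B R ∧ ValidFor A B (addEdge R u v)) ↔
      (ValidFor A B (addArc R u v) ∧ ValidFor A B (addArc R v u)) := by
  constructor
  · rintro ⟨h0, h2⟩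
    exact ⟨⟨fun p hp h => h2.1 p hp (Or.inl h), fun p hp => Or.inl (h0.2 p hp)⟩,
      ⟨fun p hp h => h2.1 p hp (Or.inr h), fun p hp => Or.inl (h0.2 p hp)⟩⟩
  · rintro ⟨huv, hvu⟩
    refine ⟨⟨fun p hp h => huv.1 p hp (Or.inl h), fun p hp => ?_⟩,
      ⟨fun p hp h => h.elim (huv.1 p hp) (hvu.1 p hp), fun p hp => Or.inl (huv.2 p hp)⟩⟩
    -- a path using `u → v` and a path using `v → u` combine into one through `u` alone
    rcases huv.2 p hp, hvu.2 p hp with ⟨h | ⟨hxu, -⟩, h' | ⟨-, huy⟩⟩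
    exacts [h, h, h', _root_.trans hxu huy]

theorem validFor_addArc_or_of_validFor (hAB : ∀ p ∈ A ∪ B, R p.1 p.2) (u v : α) (h : ValidFor A B R) :
    ValidFor A B (addArc R u v) ∨ ValidFor A B (addArc R v u) := by
  by_cases hA : ∀ p ∈ A, ¬ addArc R u v p.2 p.1
  · exact Or.inl ⟨hA, fun p hp => Or.inl (h.2 p hp)⟩
  · push Not at hA
    obtain ⟨p, hp, hpath⟩ := hA
    have hvu := rel_of_addArc_of_not_rel (hAB p (Or.inl hp)) hpath (h.1 p hp)
    exact Or.inr (by rwa [addArc_eq_of_rel hvu])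

theorem validFor_addArc_or_of_validFor_addEdge (hAB : ∀ p ∈ A ∪ B, R p.1 p.2) (u v : α) (h : ValidFor A B (addEdge R u v)) :
    ValidFor A B (addArc R u v) ∨ ValidFor A B (addArc R v u) := by
  by_cases hB : ∀ p ∈ B, addArc R u v p.2 p.1
  · exact Or.inl ⟨fun p hp h' => h.1 p hp (Or.inl h'), hB⟩
  · push Not at hB
    obtain ⟨q, hq, hn⟩ := hB
    have huv := rel_of_addArc_of_not_rel (hAB q (Or.inr hq)) ((h.2 q hq).resolve_left hn)
      fun hR => hn (Or.inl hR)
    exact Or.inr (by rwa [addEdge_eq_of_rel huv] at h)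

theorem validFor_or_of_validFor_addArc (hAB : ∀ p ∈ A ∪ B, R p.1 p.2) (u v : α) (h : ValidFor A B (addArc R u v)) :
    ValidFor A B R ∨ ValidFor A B (addEdge R u v) := by
  by_cases hB : ∀ p ∈ B, R p.2 p.1
  · exact Or.inl ⟨fun p hp hR => h.1 p hp (Or.inl hR), hB⟩
  · push Not at hB
    obtain ⟨q, hq, hn⟩ := hB
    have hvu := rel_of_addArc_of_not_rel (hAB q (Or.inr hq)) (h.2 q hq) hn
    exact Or.inr (by rwa [addEdge_comm, addEdge_eq_of_rel hvu])

theorem validFor_or_iff (hAB : ∀ p ∈ A ∪ B, R p.1 p.2) (u v : α) :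
    (ValidFor A B R ∨ ValidFor A B (addEdge R u v)) ↔
      (ValidFor A B (addArc R u v) ∨ ValidFor A B (addArc R v u)) := by
  constructor
  · rintro (h | h)
    exacts [validFor_addArc_or_of_validFor hAB u v h,
      validFor_addArc_or_of_validFor_addEdge hAB u v h]
  · rintro (h | h)
    · exact validFor_or_of_validFor_addArc hAB u v h
    · rw [addEdge_comm]
      exact validFor_or_of_validFor_addArc hAB v u h

end ValidFor

theorem isValid_eq_validFor (src tgt : E → V) (A B : Set (V × V)) (φ : E → Four) :
    IsValid src tgt A B φ = ValidFor A B (reach src tgt A B φ) := rfl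

section Reach

variable [DecidableEq E] (src tgt : E → V) (A B : Set (V × V))

instance (φ : E → Four) : IsTrans V (reach src tgt A B φ) :=
  ⟨fun _ _ _ => ReflTransGen.trans⟩

theorem arcStep_update (φ : E → Four) (e : E) (c : Four) (x y : V) :
    arcStep src tgt A B (update φ e c) x y ↔
      arcStep src tgt A B (update φ e Four.zero) x y ∨
        ∃ b, allows c b ∧ arcTail src tgt (e, b) = x ∧ arcHead src tgt (e, b) = y := by
  unfold arcStep
  constructor
  · rintro (⟨⟨f, b⟩, hall, rfl, rfl⟩ | hAB)
    · by_cases hf : f = e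
      · subst hf
        exact Or.inr ⟨b, by simpa using hall, rfl, rfl⟩
      · exact Or.inl (Or.inl ⟨(f, b), by simpa [hf] using hall, rfl, rfl⟩)
    · exact Or.inl (Or.inr hAB)
  · rintro ((⟨⟨f, b⟩, hall, rfl, rfl⟩ | hAB) | ⟨b, hall, rfl, rfl⟩)
    · by_cases hf : f = e
      · subst hf
        simp [allows] at hall
      · exact Or.inl ⟨(f, b), by simpa [hf] using hall, rfl, rfl⟩
    · exact Or.inr hAB
    · exact Or.inl ⟨(e, b), by simpa using hall, rfl, rfl⟩

variable (φ : E → Four) (e : E)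

theorem reach_update_forward :
    reach src tgt A B (update φ e Four.forward) =
      addArc (reach src tgt A B (update φ e Four.zero)) (src e) (tgt e) := by
  have hstep : arcStep src tgt A B (update φ e Four.forward) =
      fun x y => arcStep src tgt A B (update φ e Four.zero) x y ∨ (x = src e ∧ y = tgt e) := by
    funext x y
    rw [arcStep_update]
    simp [allows, arcTail, arcHead, eq_comm]
  unfold reach
  rw [hstep, reflTransGen_or_arc]

theorem reach_update_backward :
    reach src tgt A B (update φ e Four.backward) =
      addArc (reach src tgt A B (update φ e Four.zero)) (tgt e) (src e) := by
  have hstep : arcStep src tgt A B (update φ e Four.backward) =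
      fun x y => arcStep src tgt A B (update φ e Four.zero) x y ∨ (x = tgt e ∧ y = src e) := by
    funext x y
    rw [arcStep_update]
    simp [allows, arcTail, arcHead, eq_comm]
  unfold reach
  rw [hstep, reflTransGen_or_arc]

theorem reach_update_two :
    reach src tgt A B (update φ e Four.two) =
      addEdge (reach src tgt A B (update φ e Four.zero)) (src e) (tgt e) := by
  have hstep : arcStep src tgt A B (update φ e Four.two) =
      fun x y => (arcStep src tgt A B (update φ e Four.zero) x y ∨ (x = src e ∧ y = tgt e)) ∨
        (x = tgt e ∧ y = src e) := by
    funext x y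
    rw [arcStep_update]
    simp [allows, arcTail, arcHead, eq_comm]
    tauto
  rw [← addArc_addArc_swap]
  unfold reach
  rw [hstep, reflTransGen_or_arc, reflTransGen_or_arc]

theorem isValid_update_and_iff :
    (IsValid src tgt A B (update φ e Four.zero) ∧ IsValid src tgt A B (update φ e Four.two)) ↔
      (IsValid src tgt A B (update φ e Four.forward) ∧
        IsValid src tgt A B (update φ e Four.backward)) := by
  simp only [isValid_eq_validFor, reach_update_two, reach_update_forward, reach_update_backward]
  exact validFor_and_iff _ _

theorem isValid_update_or_iff :
    (IsValid src tgt A B (update φ e Four.zero) ∨ IsValid src tgt A B (update φ e Four.two)) ↔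
      (IsValid src tgt A B (update φ e Four.forward) ∨
        IsValid src tgt A B (update φ e Four.backward)) := by
  simp only [isValid_eq_validFor, reach_update_two, reach_update_forward, reach_update_backward]
  refine validFor_or_iff (fun p hp => ?_) _ _
  exact ReflTransGen.single (Or.inr hp)

end Reach

section Toggle

open Classical in
/-- An involution of `Four` exchanging solid and 1-way configurations, chosen so that it
preserves `P` whenever that is possible (see `solidOneWayPairing_spec`). -/
noncomputable def solidOneWayPairing (P : Four → Prop) : Four → Four :=
  if (P .zero ↔ P .forward) ∧ (P .two ↔ P .backward) then
    fun | .zero => .forward | .forward => .zero | .two => .backward | .backward => .two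
  else
    fun | .zero => .backward | .backward => .zero | .two => .forward | .forward => .two

theorem solidOneWayPairing_involutive (P : Four → Prop) :
    Involutive (solidOneWayPairing P) := by
  intro c
  unfold solidOneWayPairing
  split_ifs <;> cases c <;> rfl

theorem isSolid_solidOneWayPairing_iff (P : Four → Prop) (c : Four) :
    IsSolid (solidOneWayPairing P c) ↔ ¬ IsSolid c := by
  unfold solidOneWayPairing
  split_ifs <;> cases c <;> simp [IsSolid]

theorem solidOneWayPairing_spec {P : Four → Prop}
    (hand : (P .zero ∧ P .two) ↔ (P .forward ∧ P .backward))
    (hor : (P .zero ∨ P .two) ↔ (P .forward ∨ P .backward)) (c : Four) :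
    P (solidOneWayPairing P c) ↔ P c := by
  unfold solidOneWayPairing
  split_ifs with h <;> cases c <;> tauto

variable [DecidableEq E] (Valid : (E → Four) → Prop) (e : E)

/-- The predicate handed to the pairing does not depend on `φ e`, so this is an involution. -/
noncomputable def toggleAt (φ : E → Four) : E → Four :=
  update φ e (solidOneWayPairing (fun c => Valid (update φ e c)) (φ e))

theorem toggleAt_involutive : Involutive (toggleAt Valid e) := by
  intro φ
  simp only [toggleAt, update_idem, update_self, solidOneWayPairing_involutive _ (φ e),
    update_eq_self]

theorem valid_toggleAt_iff
    (hand : ∀ φ, (Valid (update φ e .zero) ∧ Valid (update φ e .two)) ↔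
      (Valid (update φ e .forward) ∧ Valid (update φ e .backward)))
    (hor : ∀ φ, (Valid (update φ e .zero) ∨ Valid (update φ e .two)) ↔
      (Valid (update φ e .forward) ∨ Valid (update φ e .backward)))
    (φ : E → Four) : Valid (toggleAt Valid e φ) ↔ Valid φ := by
  have := solidOneWayPairing_spec (P := fun c => Valid (update φ e c)) (hand φ) (hor φ) (φ e)
  rwa [update_eq_self] at this

theorem solidSet_toggleAt_eq_iff {S : Set E} (he : e ∉ S) (φ : E → Four) :
    solidSet (toggleAt Valid e φ) = S ↔ solidSet φ = insert e S := by
  have hsolid := isSolid_solidOneWayPairing_iff (fun c => Valid (update φ e c)) (φ e)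
  simp only [Set.ext_iff, solidSet, toggleAt, Set.mem_ofPred_eq, Set.mem_insert_iff]
  constructor
  · intro h x
    by_cases hx : x = e
    · subst hx
      simp only [true_or, iff_true]
      by_contra hns
      exact he ((h x).mp (by rwa [update_self, hsolid]))
    · simpa [hx] using h x
  · intro h x
    by_cases hx : x = e
    · subst hx
      simpa [hsolid, he] using (h x).mpr (Or.inl rfl)
    · simpa [hx] using h x

theorem card_solidSet_insert_eq
    (hand : ∀ φ, (Valid (update φ e .zero) ∧ Valid (update φ e .two)) ↔
      (Valid (update φ e .forward) ∧ Valid (update φ e .backward)))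
    (hor : ∀ φ, (Valid (update φ e .zero) ∨ Valid (update φ e .two)) ↔
      (Valid (update φ e .forward) ∨ Valid (update φ e .backward)))
    {S : Set E} (he : e ∉ S) :
    Nat.card {φ : E → Four // Valid φ ∧ solidSet φ = insert e S} =
      Nat.card {φ : E → Four // Valid φ ∧ solidSet φ = S} :=
  Nat.card_congr <| ((toggleAt_involutive Valid e).toPerm _).subtypeEquiv fun φ => by
    rw [Involutive.coe_toPerm, valid_toggleAt_iff Valid e hand hor,
      solidSet_toggleAt_eq_iff Valid e he]

end Toggle

theorem statement0_general {V E : Type*} [Fintype E] (src tgt : E → V)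
    (A B : Set (V × V)) (S S' : Set E) :
    Nat.card {φ : E → Four // IsValid src tgt A B φ ∧ solidSet φ = S} =
    Nat.card {φ : E → Four // IsValid src tgt A B φ ∧ solidSet φ = S'} := by
  classical
  have card_eq_card_empty (T : Set E) :
      Nat.card {φ : E → Four // IsValid src tgt A B φ ∧ solidSet φ = T} =
        Nat.card {φ : E → Four // IsValid src tgt A B φ ∧ solidSet φ = ∅} := by
    induction T, T.toFinite using Set.Finite.induction_on with
    | empty => rfl
    | @insert e T he _ ih =>
      rw [card_solidSet_insert_eq _ e (isValid_update_and_iff src tgt A B · e)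
        (isValid_update_or_iff src tgt A B · e) he, ih]
  rw [card_eq_card_empty S, card_eq_card_empty S']

/-- For any finite graph `G = (V,E)` (with multiplicities and loops allowed,
encoded by endpoint maps `src, tgt : E → V`), any `A, B ⊆ V²` and any `S, S' ⊆ E`, the number
of `(A,B)`-valid fourientations with solid edge set `S` equals the number of `(A,B)`-valid
fourientations with solid edge set `S'`. -/
theorem statement0 {V E : Type*} [Fintype V] [Fintype E] (src tgt : E → V)
    (A B : Set (V × V)) (S S' : Set E) :
    Nat.card {φ : E → Four // IsValid src tgt A B φ ∧ solidSet φ = S} =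
    Nat.card {φ : E → Four // IsValid src tgt A B φ ∧ solidSet φ = S'} :=
  statement0_general src tgt A B S S'
end SubgraphsVsOrientations
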